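/- For n ≥ 1, the number of plane trees with n edges and k young leaves equals the number of Dyck paths of length 2n with exactly k peaks at even height. -/

import Mathlib

/-- A plane tree: a root together with an ordered (possibly empty) list of subtrees. -/
inductive PlaneTree where
  | node : List PlaneTree → PlaneTree

namespace PlaneTree

/-- The number of edges of a plane tree. -/
def edges : PlaneTree → ℕ
  | node ts => (ts.attach.map (fun t => edges t.1 + 1)).sum
decreasing_by have := List.sizeOf_lt_of_mem t.2; simp at *; omega

/-- Indicator that a tree is a single vertex (i.e. the corresponding child is a leaf). -/
def isLeafInd : PlaneTree → ℕ
  | node [] => 1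
  | node (_ :: _) => 0

/-- The number of old leaves: leaves that are the leftmost child of their parent. -/
def oldLeaves : PlaneTree → ℕ
  | node [] => 0
  | node (t :: ts) =>
      isLeafInd t + oldLeaves t + (ts.attach.map (fun s => oldLeaves s.1)).sum
decreasing_by
  · simp; omega
  · have := List.sizeOf_lt_of_mem s.2; simp at *; omega

/-- The number of young leaves: leaves that are not the leftmost child of their parent. -/
def youngLeaves : PlaneTree → ℕ
  | node [] => 0
  | node (t :: ts) =>
      youngLeaves t + (ts.attach.map (fun s => isLeafInd s.1 + youngLeaves s.1)).sum
decreasing_by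
  · simp; omega
  · have := List.sizeOf_lt_of_mem s.2; simp at *; omega

end PlaneTree

/-- Steps of a Dyck path. -/
inductive StepUD where
  | up : StepUD
  | down : StepUD
deriving DecidableEq

/-- The height change of a step. -/
def StepUD.h : StepUD → ℤ
  | .up => 1
  | .down => -1

/-- A list of steps is a Dyck path if it ends at height 0 and no prefix goes below
the x-axis. -/
def IsDyck (p : List StepUD) : Prop :=
  (p.map StepUD.h).sum = 0 ∧ ∀ q : List StepUD, q <+: p → 0 ≤ (q.map StepUD.h).sum

/-- The number of peaks (occurrences of `UD`) of `p` at even height, the height of a peak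
being the height of the vertex between its two steps. -/
def evenPeaks (p : List StepUD) : ℕ :=
  ((Finset.range p.length).filter (fun i =>
    p.getD i .down = .up ∧ p.getD (i + 1) .up = .down ∧
      ((p.take (i + 1)).map StepUD.h).sum % 2 = 0)).card

/-- The number of occurrences of the factor `DUD` in `p`. -/
def dudCount (p : List StepUD) : ℕ :=
  ((Finset.range p.length).filter (fun i =>
    p.getD i .up = .down ∧ p.getD (i + 1) .down = .up ∧ p.getD (i + 2) .up = .down)).card

/-!
Encode a plane tree by the Dyck word `v` and a forest by the Dyck word `w`, where
`v (node []) = ε`, `v (node (t :: ts)) = U w(ts) D v(t)`, `w [] = ε` and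
`w (t :: ts) = U v(t) D w(ts)`. This is the Dyck word of a binary tree, and the passage from plane
trees to these binary trees is invertible, so `v` is a bijection from trees with `n` edges onto
Dyck paths of semilength `n`.

Inside `v(T)` the word of every subtree starts at even height and every forest word at odd height.
A peak `UD` of `v(T)` is therefore either a factor `U v(tᵢ) D` of a forest word with `tᵢ` a leaf
that is not a first child, at even height, or a factor `U w([]) D` coming from a node with a single
child, at odd height. So the even peaks of `v(T)` are exactly its young leaves.
-/

namespace PlaneTree

theorem edges_node (ts : List PlaneTree) : edges (node ts) = (ts.map (edges · + 1)).sum := by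
  rw [edges]; simp

theorem youngLeaves_node_cons (t : PlaneTree) (ts : List PlaneTree) :
    youngLeaves (node (t :: ts)) =
      youngLeaves t + (ts.map fun s => isLeafInd s + youngLeaves s).sum := by
  rw [youngLeaves]; simp

def toBinaryTree : PlaneTree → BinaryTree Unit
  | node [] => .nil
  | node (t :: ts) => .node () (forest ts) (toBinaryTree t)
where
  forest : List PlaneTree → BinaryTree Unit
    | [] => .nil
    | t :: ts => .node () (toBinaryTree t) (forest ts)

def ofBinaryTree : BinaryTree Unit → PlaneTree
  | .nil => node []
  | .node _ l r => node (ofBinaryTree r :: forest l)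
where
  forest : BinaryTree Unit → List PlaneTree
    | .nil => []
    | .node _ l r => ofBinaryTree l :: forest r

theorem ofBinaryTree_toBinaryTree : ∀ T, ofBinaryTree (toBinaryTree T) = T
  | node [] => rfl
  | node (t :: ts) => by
    rw [toBinaryTree, ofBinaryTree, ofBinaryTree_toBinaryTree t, forest ts]
where
  forest : ∀ ts, ofBinaryTree.forest (toBinaryTree.forest ts) = ts
    | [] => rfl
    | t :: ts => by
      rw [toBinaryTree.forest, ofBinaryTree.forest, ofBinaryTree_toBinaryTree t, forest ts]

theorem toBinaryTree_ofBinaryTree : ∀ b, toBinaryTree (ofBinaryTree b) = b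
  | .nil => rfl
  | .node () l r => by
    rw [ofBinaryTree, toBinaryTree, toBinaryTree_ofBinaryTree r, forest l]
where
  forest : ∀ b, toBinaryTree.forest (ofBinaryTree.forest b) = b
    | .nil => rfl
    | .node () l r => by
      rw [ofBinaryTree.forest, toBinaryTree.forest, toBinaryTree_ofBinaryTree l, forest r]

def equivBinaryTree : PlaneTree ≃ BinaryTree Unit where
  toFun := toBinaryTree
  invFun := ofBinaryTree
  left_inv := ofBinaryTree_toBinaryTree
  right_inv := toBinaryTree_ofBinaryTree

theorem numNodes_toBinaryTree : ∀ T, (toBinaryTree T).numNodes = edges T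
  | node [] => by simp [toBinaryTree, edges_node]
  | node (t :: ts) => by
    rw [toBinaryTree, BinaryTree.numNodes, forest ts, numNodes_toBinaryTree t, edges_node]
    simp only [List.map_cons, List.sum_cons]
    ring
where
  forest : ∀ ts, (toBinaryTree.forest ts).numNodes = (ts.map (edges · + 1)).sum
    | [] => rfl
    | t :: ts => by
      rw [toBinaryTree.forest, BinaryTree.numNodes, forest ts, numNodes_toBinaryTree t]
      simp only [List.map_cons, List.sum_cons]
      ring

theorem isLeafInd_eq (t : PlaneTree) :
    isLeafInd t = if toBinaryTree t = .nil then 1 else 0 := by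
  rcases t with ⟨_ | ⟨_, _⟩⟩ <;> simp [isLeafInd, toBinaryTree]

end PlaneTree

/-- `evenPeaksFrom h prev p` counts the even-height peaks of `p` when `p` starts, after a step
`prev`, at a vertex whose height has parity `h`. -/
def evenPeaksFrom : ZMod 2 → StepUD → List StepUD → ℕ
  | _, _, [] => 0
  | h, prev, s :: p =>
      (if prev = .up ∧ s = .down ∧ h = 0 then 1 else 0) + evenPeaksFrom (h + s.h) s p

theorem evenPeaksFrom_eq_card (h : ZMod 2) (prev : StepUD) (p : List StepUD) :
    evenPeaksFrom h prev p = (if prev = .up ∧ p.getD 0 .up = .down ∧ h = 0 then 1 else 0) +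
      ((Finset.range p.length).filter fun i =>
        p.getD i .down = .up ∧ p.getD (i + 1) .up = .down ∧
          h + (((p.take (i + 1)).map StepUD.h).sum : ZMod 2) = 0).card := by
  induction p generalizing h prev with
  | nil => simp [evenPeaksFrom]
  | cons s p ih =>
    rw [evenPeaksFrom, ih, Finset.card_filter, Finset.card_filter, List.length_cons,
      Finset.sum_range_succ']
    cases s
    · simpa [StepUD.h, add_assoc] using add_comm _ _
    · simp [StepUD.h, add_assoc]

theorem evenPeaks_eq_evenPeaksFrom (p : List StepUD) : evenPeaks p = evenPeaksFrom 0 .down p := by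
  rw [evenPeaksFrom_eq_card, evenPeaks]
  simp only [reduceCtorEq, false_and, if_false, zero_add, ZMod.intCast_zmod_eq_zero_iff_dvd,
    Nat.cast_ofNat, Int.dvd_iff_emod_eq_zero]

theorem evenPeaksFrom_append (h : ZMod 2) (prev : StepUD) (p q : List StepUD) :
    evenPeaksFrom h prev (p ++ q) = evenPeaksFrom h prev p +
      evenPeaksFrom (h + ((p.map StepUD.h).sum : ℤ)) (p.getLastD prev) q := by
  induction p generalizing h prev with
  | nil => simp [evenPeaksFrom]
  | cons s p ih => simp [evenPeaksFrom, ih, add_assoc, List.getLast?_cons]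

def dyckStepEquiv : DyckStep ≃ StepUD where
  toFun | .U => .up | .D => .down
  invFun | .up => .U | .down => .D
  left_inv s := by cases s <;> rfl
  right_inv s := by cases s <;> rfl

theorem sum_map_dyckStepEquiv (w : List DyckStep) :
    ((w.map dyckStepEquiv).map StepUD.h).sum = (w.count .U : ℤ) - w.count .D := by
  induction w with
  | nil => simp
  | cons s w ih =>
    simp only [List.map_cons, List.sum_cons, ih, List.count_cons]
    cases s <;> simp [dyckStepEquiv, StepUD.h] <;> ring

theorem isDyck_iff_take (p : List StepUD) :
    IsDyck p ↔ (p.map StepUD.h).sum = 0 ∧ ∀ i, 0 ≤ ((p.take i).map StepUD.h).sum := by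
  refine and_congr_right fun _ => ⟨fun h i => h _ (List.take_prefix i p), ?_⟩
  rintro h q hq
  rw [List.prefix_iff_eq_take.1 hq]
  exact h _

theorem isDyck_map_dyckStepEquiv_iff (w : List DyckStep) :
    IsDyck (w.map dyckStepEquiv) ↔
      w.count .U = w.count .D ∧ ∀ i, (w.take i).count .D ≤ (w.take i).count .U := by
  simp only [isDyck_iff_take, ← List.map_take, sum_map_dyckStepEquiv, sub_eq_zero, sub_nonneg]
  norm_cast

namespace DyckWord

def toSteps (p : DyckWord) : List StepUD := p.toList.map dyckStepEquiv

theorem isDyck_toSteps (p : DyckWord) : IsDyck p.toSteps :=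
  (isDyck_map_dyckStepEquiv_iff _).2 ⟨p.count_U_eq_count_D, p.count_D_le_count_U⟩

def ofSteps (p : List StepUD) (hp : IsDyck p) : DyckWord :=
  have hp' : IsDyck ((p.map dyckStepEquiv.symm).map dyckStepEquiv) := by
    simpa [List.map_map] using hp
  ⟨p.map dyckStepEquiv.symm, ((isDyck_map_dyckStepEquiv_iff _).1 hp').1,
    ((isDyck_map_dyckStepEquiv_iff _).1 hp').2⟩

def equivIsDyck : DyckWord ≃ {p : List StepUD // IsDyck p} where
  toFun p := ⟨p.toSteps, p.isDyck_toSteps⟩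
  invFun p := ofSteps p.1 p.2
  left_inv p := by ext1; simp [toSteps, ofSteps, List.map_map]
  right_inv p := by ext1; simp [toSteps, ofSteps, List.map_map]

theorem toSteps_zero : (0 : DyckWord).toSteps = [] := rfl

theorem toSteps_add (p q : DyckWord) : (p + q).toSteps = p.toSteps ++ q.toSteps :=
  List.map_append ..

theorem toSteps_nest (p : DyckWord) : p.nest.toSteps = .up :: (p.toSteps ++ [.down]) := by
  simp [toSteps, nest, dyckStepEquiv]

theorem toSteps_eq_of_ne_zero {p : DyckWord} (hp : p ≠ 0) :
    ∃ m, p.toSteps = .up :: (m ++ [.down]) :=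
  ⟨p.toList.dropLast.tail.map dyckStepEquiv, by
    conv_lhs => rw [toSteps, ← cons_tail_dropLast_concat hp]
    simp [dyckStepEquiv]⟩

theorem sum_map_toSteps (p : DyckWord) : (p.toSteps.map StepUD.h).sum = 0 :=
  p.isDyck_toSteps.1

theorem getLastD_toSteps {p : DyckWord} (hp : p ≠ 0) (s : StepUD) :
    p.toSteps.getLastD s = .down := by
  obtain ⟨m, hm⟩ := toSteps_eq_of_ne_zero hp
  rw [hm, ← List.cons_append, List.getLastD_concat]

theorem length_toSteps (p : DyckWord) : p.toSteps.length = 2 * p.semilength := by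
  rw [toSteps, List.length_map, two_mul_semilength_eq_length]

def evenPeaksAt (h : ZMod 2) (p : DyckWord) : ℕ := evenPeaksFrom h .down p.toSteps

theorem evenPeaksAt_add (h : ZMod 2) (p q : DyckWord) :
    evenPeaksAt h (p + q) = evenPeaksAt h p + evenPeaksAt h q := by
  have hlast : p.toSteps.getLastD .down = .down := by
    rcases eq_or_ne p 0 with rfl | hp
    · rfl
    · exact getLastD_toSteps hp _
  rw [evenPeaksAt, toSteps_add, evenPeaksFrom_append, sum_map_toSteps, hlast, Int.cast_zero,
    add_zero]
  rfl

theorem evenPeaksAt_nest (h : ZMod 2) (p : DyckWord) :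
    evenPeaksAt h p.nest = evenPeaksAt (h + 1) p + if p = 0 ∧ h + 1 = 0 then 1 else 0 := by
  rw [evenPeaksAt, toSteps_nest, evenPeaksFrom, evenPeaksFrom_append, sum_map_toSteps]
  rcases eq_or_ne p 0 with rfl | hp
  · simp [evenPeaksAt, evenPeaksFrom, toSteps_zero, StepUD.h]
  · rw [getLastD_toSteps hp]
    obtain ⟨m, hm⟩ := toSteps_eq_of_ne_zero hp
    simp [evenPeaksAt, evenPeaksFrom, hm, hp, StepUD.h]

theorem ofTree_eq_zero_iff {b : BinaryTree Unit} : ofTree b = 0 ↔ b = .nil := by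
  cases b <;> simp [ofTree]

end DyckWord

namespace PlaneTree

open DyckWord

theorem evenPeaksAt_ofTree_toBinaryTree :
    ∀ T, (ofTree (toBinaryTree T)).evenPeaksAt 0 = youngLeaves T
  | node [] => by rw [youngLeaves]; rfl
  | node (t :: ts) => by
    rw [toBinaryTree, ofTree, evenPeaksAt_add, evenPeaksAt_nest, zero_add, forest ts,
      evenPeaksAt_ofTree_toBinaryTree t, youngLeaves_node_cons]
    simp only [one_ne_zero, and_false, if_false, add_zero]
    ring
where
  forest : ∀ ts, (ofTree (toBinaryTree.forest ts)).evenPeaksAt 1 =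
      (ts.map fun s => isLeafInd s + youngLeaves s).sum
    | [] => rfl
    | t :: ts => by
      rw [toBinaryTree.forest, ofTree, evenPeaksAt_add, evenPeaksAt_nest,
        show (1 : ZMod 2) + 1 = 0 by decide, forest ts, evenPeaksAt_ofTree_toBinaryTree t,
        List.map_cons, List.sum_cons, isLeafInd_eq]
      simp only [ofTree_eq_zero_iff, and_true]
      ring

end PlaneTree

theorem card_young_eq_card_evenPeaks_general (n k : ℕ) :
    Nat.card {T : PlaneTree // T.edges = n ∧ T.youngLeaves = k} =
      Nat.card {p : List StepUD // p.length = 2 * n ∧ IsDyck p ∧ evenPeaks p = k} := by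
  calc Nat.card {T : PlaneTree // T.edges = n ∧ T.youngLeaves = k}
      = Nat.card {b : BinaryTree Unit //
          b.numNodes = n ∧ (DyckWord.ofTree b).evenPeaksAt 0 = k} :=
        Nat.card_congr <| PlaneTree.equivBinaryTree.subtypeEquiv fun T => by
          simp [PlaneTree.equivBinaryTree, PlaneTree.numNodes_toBinaryTree,
            PlaneTree.evenPeaksAt_ofTree_toBinaryTree]
    _ = Nat.card {p : DyckWord // p.semilength = n ∧ p.evenPeaksAt 0 = k} :=
        Nat.card_congr <| DyckWord.equivTree.symm.subtypeEquiv fun b => by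
          rw [DyckWord.equivTree_symm_apply, ← DyckWord.numNodes_toTree, DyckWord.toTree_ofTree]
    _ = Nat.card {p : {p : List StepUD // IsDyck p} // p.1.length = 2 * n ∧ evenPeaks p.1 = k} :=
        Nat.card_congr <| DyckWord.equivIsDyck.subtypeEquiv fun p => by
          rw [show (DyckWord.equivIsDyck p).1 = p.toSteps from rfl, DyckWord.length_toSteps,
            evenPeaks_eq_evenPeaksFrom]
          exact and_congr (by omega) Iff.rfl
    _ = Nat.card {p : List StepUD // p.length = 2 * n ∧ IsDyck p ∧ evenPeaks p = k} :=
        Nat.card_congr <| (Equiv.subtypeSubtypeEquivSubtypeInter IsDyck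
          fun p => p.length = 2 * n ∧ evenPeaks p = k).trans
          (Equiv.subtypeEquivRight fun p => by tauto)

/-- The number of plane trees with `n` edges and `k` young leaves equals the number of
Dyck paths of length `2n` with exactly `k` peaks at even height. -/
theorem card_young_eq_card_evenPeaks (n k : ℕ) (hn : 1 ≤ n) :
    Nat.card {T : PlaneTree // T.edges = n ∧ T.youngLeaves = k} =
      Nat.card {p : List StepUD // p.length = 2 * n ∧ IsDyck p ∧ evenPeaks p = k} :=
  card_young_eq_card_evenPeaks_general n k
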